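/- (Theorem 2, primal part.) Let A_j = A_i ∪ {j} with j ∉ A_i, and suppose both G_{A_i} and G_{A_j} have full row rank. Define c_i = c_j, v_i = v_j, and f_i = −f_j. Then for every θ ∈ ℝⁿ, the primal parametric solution obtained by removing constraint j from A_j satisfies z_{A_i}(θ) = z_{A_j}(θ) + f_i (c_i + v_iᵀθ). -/

import Mathlib

open Matrix

noncomputable section
namespace MpQP

/-- Submatrix of the rows of `G` indexed by the finite index set `A`. -/
def subRows {nc p : ℕ} (G : Matrix (Fin nc) (Fin p) ℝ) (A : Finset (Fin nc)) :
    Matrix A (Fin p) ℝ := Matrix.of fun i k => G i.val k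

/-- Subvector of `b` indexed by `A`. -/
def subVec {nc : ℕ} (b : Fin nc → ℝ) (A : Finset (Fin nc)) : A → ℝ := fun i => b i.val

/-- `G_A` has full row rank, i.e. the rows of `G` indexed by `A` are linearly independent. -/
def FullRowRank {nc m : ℕ} (G : Matrix (Fin nc) (Fin m) ℝ) (A : Finset (Fin nc)) : Prop :=
  LinearIndependent ℝ (fun i : A => G i.val)

/-- The parametric dual solution `λ_A(θ) = −(G_A H⁻¹ G_Aᵀ)⁻¹ (b_A + S_A θ)`. -/
def lamOf {m n nc : ℕ} (H : Matrix (Fin m) (Fin m) ℝ) (G : Matrix (Fin nc) (Fin m) ℝ)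
    (b : Fin nc → ℝ) (S : Matrix (Fin nc) (Fin n) ℝ) (A : Finset (Fin nc))
    (θ : Fin n → ℝ) : A → ℝ :=
  -((subRows G A * H⁻¹ * (subRows G A)ᵀ)⁻¹.mulVec
      (fun i => b i.val + S.mulVec θ i.val))

/-- The parametric primal solution `z_A(θ) = −H⁻¹ G_Aᵀ λ_A(θ)`. -/
def zOf {m n nc : ℕ} (H : Matrix (Fin m) (Fin m) ℝ) (G : Matrix (Fin nc) (Fin m) ℝ)
    (b : Fin nc → ℝ) (S : Matrix (Fin nc) (Fin n) ℝ) (A : Finset (Fin nc))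
    (θ : Fin n → ℝ) : Fin m → ℝ :=
  -((H⁻¹ * (subRows G A)ᵀ).mulVec (lamOf H G b S A θ))

/-- `λ̃_A(θ) ∈ ℝ^{n_c}`: the dual solution extended by zeros outside `A`. -/
def lamExt {m n nc : ℕ} (H : Matrix (Fin m) (Fin m) ℝ) (G : Matrix (Fin nc) (Fin m) ℝ)
    (b : Fin nc → ℝ) (S : Matrix (Fin nc) (Fin n) ℝ) (A : Finset (Fin nc))
    (θ : Fin n → ℝ) : Fin nc → ℝ :=
  fun k => if h : k ∈ A then lamOf H G b S A θ ⟨k, h⟩ else 0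

/-- `W = G_A H⁻¹ G_Aᵀ`. -/
def Wmat {m nc : ℕ} (H : Matrix (Fin m) (Fin m) ℝ) (G : Matrix (Fin nc) (Fin m) ℝ)
    (A : Finset (Fin nc)) : Matrix A A ℝ :=
  subRows G A * H⁻¹ * (subRows G A)ᵀ

/-- `w = G_A H⁻¹ G_jᵀ`. -/
def wvec {m nc : ℕ} (H : Matrix (Fin m) (Fin m) ℝ) (G : Matrix (Fin nc) (Fin m) ℝ)
    (A : Finset (Fin nc)) (j : Fin nc) : A → ℝ :=
  (subRows G A * H⁻¹).mulVec (G j)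

/-- `w₀ = G_j H⁻¹ G_jᵀ`. -/
def w0 {m nc : ℕ} (H : Matrix (Fin m) (Fin m) ℝ) (G : Matrix (Fin nc) (Fin m) ℝ)
    (j : Fin nc) : ℝ :=
  G j ⬝ᵥ H⁻¹.mulVec (G j)

/-- The Schur complement `C = w₀ − wᵀ W⁻¹ w`. -/
def Cval {m nc : ℕ} (H : Matrix (Fin m) (Fin m) ℝ) (G : Matrix (Fin nc) (Fin m) ℝ)
    (A : Finset (Fin nc)) (j : Fin nc) : ℝ :=
  w0 H G j - wvec H G A j ⬝ᵥ (Wmat H G A)⁻¹.mulVec (wvec H G A j)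

/-- `c_j = C⁻¹ (wᵀ W⁻¹ b_A − b_j)`. -/
def cVal {m nc : ℕ} (H : Matrix (Fin m) (Fin m) ℝ) (G : Matrix (Fin nc) (Fin m) ℝ)
    (b : Fin nc → ℝ) (A : Finset (Fin nc)) (j : Fin nc) : ℝ :=
  (Cval H G A j)⁻¹ * (wvec H G A j ⬝ᵥ (Wmat H G A)⁻¹.mulVec (subVec b A) - b j)

/-- `v_j = C⁻¹ (S_Aᵀ W⁻¹ w − S_jᵀ)`. -/
def vVec {m n nc : ℕ} (H : Matrix (Fin m) (Fin m) ℝ) (G : Matrix (Fin nc) (Fin m) ℝ)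
    (S : Matrix (Fin nc) (Fin n) ℝ) (A : Finset (Fin nc)) (j : Fin nc) : Fin n → ℝ :=
  (Cval H G A j)⁻¹ •
    ((subRows S A)ᵀ.mulVec ((Wmat H G A)⁻¹.mulVec (wvec H G A j)) - S j)

/-- `d̃_j ∈ ℝ^{n_c}`: equal to `W⁻¹ w` on `A`, to `−1` at index `j`, and `0` elsewhere. -/
def dExt {m nc : ℕ} (H : Matrix (Fin m) (Fin m) ℝ) (G : Matrix (Fin nc) (Fin m) ℝ)
    (A : Finset (Fin nc)) (j : Fin nc) : Fin nc → ℝ :=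
  fun k =>
    if h : k ∈ A then (Wmat H G A)⁻¹.mulVec (wvec H G A j) ⟨k, h⟩
    else if k = j then -1 else 0

/-- `f_j = H⁻¹ G_{A ∪ {j}}ᵀ (d̃_j restricted to A ∪ {j})`. -/
def fVec {m nc : ℕ} (H : Matrix (Fin m) (Fin m) ℝ) (G : Matrix (Fin nc) (Fin m) ℝ)
    (A : Finset (Fin nc)) (j : Fin nc) : Fin m → ℝ :=
  (H⁻¹ * (subRows G (insert j A))ᵀ).mulVec (fun i => dExt H G A j i.val)

/-! With `q = W⁻¹ w`, the direction `f_j = H⁻¹ (G_Aᵀ q − G_jᵀ)` satisfies `G_A f_j = 0` and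
`G_j f_j = −C`. Moving from `z_{A_i}(θ)` along `f_j` therefore keeps the constraints of `A_i`
active, and the step `α = C⁻¹ (G_j z_{A_i}(θ) − b_j − S_j θ)` makes constraint `j` active as well.
The point reached lies in the range of `H⁻¹ G_{A_j}ᵀ`, and `z_{A_j}(θ)` is the only point of that
range at which all constraints of `A_j` are active, so it is `z_{A_j}(θ)`. Finally
`α = c_j + v_jᵀ θ`, and `C > 0` because `C = gᵀ H⁻¹ g` for `g = G_Aᵀ q − G_jᵀ = G_{A_j}ᵀ d̃_j`,
which is nonzero since `G_{A_j}` has full row rank and `d̃_j` has the entry `−1` at `j`. -/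

variable {m n nc : ℕ} {H : Matrix (Fin m) (Fin m) ℝ} {G : Matrix (Fin nc) (Fin m) ℝ}
  {b : Fin nc → ℝ} {S : Matrix (Fin nc) (Fin n) ℝ} {A : Finset (Fin nc)} {j : Fin nc}

lemma subRows_transpose_mulVec_restrict {μ : Fin nc → ℝ} (hμ : ∀ k ∉ A, μ k = 0) :
    (subRows G A)ᵀ *ᵥ (fun i : A => μ i) = Gᵀ *ᵥ μ := by
  ext l
  simp only [mulVec, dotProduct, transpose_apply, subRows, of_apply]
  rw [Finset.sum_coe_sort A (fun k => G k l * μ k)]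
  exact Finset.sum_subset (Finset.subset_univ A) fun k _ hk => by simp [hμ k hk]

lemma isUnit_det_Wmat (hH : H.PosDef) (hA : FullRowRank G A) : IsUnit (Wmat H G A).det := by
  have := hH.inv.mul_mul_conjTranspose_same (B := subRows G A) (vecMul_injective_iff.mpr hA)
  rw [conjTranspose_eq_transpose_of_trivial] at this
  exact (isUnit_iff_isUnit_det _).mp this.isUnit

lemma isSymm_Wmat (hH : H.IsSymm) : (Wmat H G A).IsSymm := by
  simp [Wmat, IsSymm, transpose_mul, hH.inv.eq, Matrix.mul_assoc]

lemma dotProduct_inv_mulVec_subRows_transpose (hH : H.IsSymm) (y : A → ℝ) :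
    G j ⬝ᵥ H⁻¹ *ᵥ (subRows G A)ᵀ *ᵥ y = wvec H G A j ⬝ᵥ y := by
  rw [dotProduct_mulVec, dotProduct_mulVec, vecMul_transpose, ← mulVec_transpose, hH.inv.eq,
    wvec, mulVec_mulVec]

lemma zOf_eq (θ : Fin n → ℝ) :
    zOf H G b S A θ =
      H⁻¹ *ᵥ (subRows G A)ᵀ *ᵥ (Wmat H G A)⁻¹ *ᵥ fun i => b i + (S *ᵥ θ) i := by
  rw [zOf, lamOf, mulVec_neg, neg_neg, ← mulVec_mulVec]
  rfl

lemma zOf_eq_lamExt (θ : Fin n → ℝ) :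
    zOf H G b S A θ = -(H⁻¹ *ᵥ Gᵀ *ᵥ lamExt H G b S A θ) := by
  have hsupp : ∀ k ∉ A, lamExt H G b S A θ k = 0 := fun k hk => dif_neg hk
  rw [← subRows_transpose_mulVec_restrict hsupp, mulVec_mulVec, zOf]
  congr 3
  exact funext fun i => by simp [lamExt]

lemma subRows_mulVec_zOf (hW : IsUnit (Wmat H G A).det) (θ : Fin n → ℝ) :
    subRows G A *ᵥ zOf H G b S A θ = fun i : A => b i + (S *ᵥ θ) i := by
  rw [zOf_eq, mulVec_mulVec, mulVec_mulVec, ← Wmat, mulVec_mulVec, mul_nonsing_inv _ hW,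
    one_mulVec]

lemma zOf_eq_of_active (hW : IsUnit (Wmat H G A).det) {θ : Fin n → ℝ} {μ : Fin nc → ℝ}
    (hμ : ∀ k ∉ A, μ k = 0) (hact : ∀ k ∈ A, G k ⬝ᵥ H⁻¹ *ᵥ Gᵀ *ᵥ μ = b k + (S *ᵥ θ) k) :
    zOf H G b S A θ = H⁻¹ *ᵥ Gᵀ *ᵥ μ := by
  have hWμ : Wmat H G A *ᵥ (fun i : A => μ i) = fun i : A => b i + (S *ᵥ θ) i := by
    ext i
    rw [Wmat, ← mulVec_mulVec, ← mulVec_mulVec, subRows_transpose_mulVec_restrict hμ]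
    exact hact i i.2
  rw [zOf_eq, ← hWμ, mulVec_mulVec _ (Wmat H G A)⁻¹, nonsing_inv_mul _ hW, one_mulVec,
    subRows_transpose_mulVec_restrict hμ]

lemma dExt_eq_zero_of_not_mem {k : Fin nc} (hk : k ∉ insert j A) : dExt H G A j k = 0 := by
  rw [Finset.mem_insert, not_or] at hk
  simp [dExt, hk.1, hk.2]

lemma transpose_mulVec_dExt (hj : j ∉ A) :
    Gᵀ *ᵥ dExt H G A j = (subRows G A)ᵀ *ᵥ (Wmat H G A)⁻¹ *ᵥ wvec H G A j - G j := by
  set q := (Wmat H G A)⁻¹ *ᵥ wvec H G A j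
  have hsplit : dExt H G A j = (fun k => if h : k ∈ A then q ⟨k, h⟩ else 0) - Pi.single j 1 := by
    ext k
    by_cases hk : k ∈ A
    · simp [dExt, hk, q, ne_of_mem_of_not_mem hk hj]
    · by_cases hkj : k = j <;> simp [dExt, hk, hkj, hj]
  rw [hsplit, mulVec_sub, mulVec_single_one, ← subRows_transpose_mulVec_restrict (A := A)]
  · simp [q, row]
  · intro k hk; simp [hk]

lemma fVec_eq_dExt : fVec H G A j = H⁻¹ *ᵥ Gᵀ *ᵥ dExt H G A j := by
  rw [fVec, ← mulVec_mulVec, subRows_transpose_mulVec_restrict fun k => dExt_eq_zero_of_not_mem]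

lemma fVec_eq (hj : j ∉ A) :
    fVec H G A j = H⁻¹ *ᵥ ((subRows G A)ᵀ *ᵥ (Wmat H G A)⁻¹ *ᵥ wvec H G A j - G j) := by
  rw [fVec_eq_dExt, transpose_mulVec_dExt hj]

lemma subRows_mulVec_fVec (hj : j ∉ A) (hW : IsUnit (Wmat H G A).det) :
    subRows G A *ᵥ fVec H G A j = 0 := by
  rw [fVec_eq hj, mulVec_mulVec, mulVec_sub, mulVec_mulVec, mulVec_mulVec, ← Wmat,
    mul_nonsing_inv _ hW, one_mulVec, wvec, sub_self]

lemma dotProduct_fVec_self (hH : H.IsSymm) (hj : j ∉ A) :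
    G j ⬝ᵥ fVec H G A j = -Cval H G A j := by
  rw [fVec_eq hj, mulVec_sub, dotProduct_sub, dotProduct_inv_mulVec_subRows_transpose hH, Cval, w0]
  ring

lemma Cval_pos (hH : H.PosDef) (hj : j ∉ A) (hA : FullRowRank G A)
    (hAj : FullRowRank G (insert j A)) : 0 < Cval H G A j := by
  set g := (subRows G A)ᵀ *ᵥ (Wmat H G A)⁻¹ *ᵥ wvec H G A j - G j with hg_def
  have hg : g ≠ 0 := by
    rw [hg_def, ← transpose_mulVec_dExt hj,
      ← subRows_transpose_mulVec_restrict fun k => dExt_eq_zero_of_not_mem, mulVec_transpose]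
    intro h0
    have hd := vecMul_injective_iff.mpr hAj (h0.trans (zero_vecMul _).symm)
    have := congrFun hd ⟨j, Finset.mem_insert_self j A⟩
    simp [dExt, hj] at this
  have hgf : g ⬝ᵥ fVec H G A j = Cval H G A j := by
    rw [hg_def, sub_dotProduct, mulVec_transpose, ← dotProduct_mulVec,
      subRows_mulVec_fVec hj (isUnit_det_Wmat hH hA), dotProduct_zero,
      dotProduct_fVec_self (isHermitian_iff_isSymm.mp hH.isHermitian) hj, zero_sub, neg_neg]
  rw [← hgf, fVec_eq hj, ← hg_def]
  simpa only [star_trivial] using hH.inv.dotProduct_mulVec_pos hg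

lemma zOf_insert (hH : H.PosDef) (hj : j ∉ A) (hA : FullRowRank G A)
    (hAj : FullRowRank G (insert j A)) (θ : Fin n → ℝ) :
    zOf H G b S (insert j A) θ = zOf H G b S A θ +
      ((Cval H G A j)⁻¹ * (G j ⬝ᵥ zOf H G b S A θ - (b j + (S *ᵥ θ) j))) • fVec H G A j := by
  set α := (Cval H G A j)⁻¹ * (G j ⬝ᵥ zOf H G b S A θ - (b j + (S *ᵥ θ) j))
  have hW := isUnit_det_Wmat hH hA
  have hz : zOf H G b S A θ + α • fVec H G A j =
      H⁻¹ *ᵥ Gᵀ *ᵥ (-lamExt H G b S A θ + α • dExt H G A j) := by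
    rw [mulVec_add, mulVec_add, mulVec_neg, mulVec_neg, mulVec_smul, mulVec_smul,
      ← zOf_eq_lamExt, ← fVec_eq_dExt]
  rw [hz]
  refine zOf_eq_of_active (isUnit_det_Wmat hH hAj) (fun k hk => ?_) fun k hk => ?_
  · have hkA : k ∉ A := fun h => hk (Finset.mem_insert_of_mem h)
    simp [lamExt, hkA, dExt_eq_zero_of_not_mem hk]
  rw [← hz, dotProduct_add, dotProduct_smul, smul_eq_mul]
  rcases Finset.mem_insert.mp hk with rfl | hkA
  · rw [dotProduct_fVec_self (isHermitian_iff_isSymm.mp hH.isHermitian) hj]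
    have hC := (Cval_pos hH hj hA hAj).ne'
    simp only [α]
    field_simp
    ring
  · have hzk : G k ⬝ᵥ zOf H G b S A θ = b k + (S *ᵥ θ) k :=
      congrFun (subRows_mulVec_zOf hW θ) ⟨k, hkA⟩
    have hfk : G k ⬝ᵥ fVec H G A j = 0 := congrFun (subRows_mulVec_fVec hj hW) ⟨k, hkA⟩
    rw [hzk, hfk, mul_zero, add_zero]

lemma cVal_add_vVec_dotProduct (hH : H.IsSymm) (θ : Fin n → ℝ) :
    cVal H G b A j + vVec H G S A j ⬝ᵥ θ =
      (Cval H G A j)⁻¹ * (G j ⬝ᵥ zOf H G b S A θ - (b j + (S *ᵥ θ) j)) := by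
  have hu : (fun i : A => b i + (S *ᵥ θ) i) = subVec b A + subRows S A *ᵥ θ := rfl
  have hv : ((subRows S A)ᵀ *ᵥ (Wmat H G A)⁻¹ *ᵥ wvec H G A j) ⬝ᵥ θ =
      wvec H G A j ⬝ᵥ (Wmat H G A)⁻¹ *ᵥ subRows S A *ᵥ θ := by
    rw [mulVec_transpose, ← dotProduct_mulVec, dotProduct_mulVec (wvec H G A j),
      ← mulVec_transpose, (isSymm_Wmat hH).inv.eq]
  rw [zOf_eq, dotProduct_inv_mulVec_subRows_transpose hH, hu, mulVec_add, dotProduct_add, cVal,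
    vVec, smul_dotProduct, sub_dotProduct, smul_eq_mul, hv]
  change _ + _ * (_ - S j ⬝ᵥ θ) = _ * (_ - (b j + S j ⬝ᵥ θ))
  ring

/-- Theorem 2, primal part: removing constraint `j` from `A_j = A_i ∪ {j}` gives
`z_{A_i}(θ) = z_{A_j}(θ) + (c_i + v_iᵀθ) f_i`, where `c_i = c_j`, `v_i = v_j`
and `f_i = −f_j`. -/
theorem primal_rankOne_update_remove
    {m n nc : ℕ} (H : Matrix (Fin m) (Fin m) ℝ) (hH : H.PosDef)
    (G : Matrix (Fin nc) (Fin m) ℝ) (b : Fin nc → ℝ) (S : Matrix (Fin nc) (Fin n) ℝ)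
    (Ai : Finset (Fin nc)) (j : Fin nc) (hj : j ∉ Ai)
    (hAi : FullRowRank G Ai) (hAj : FullRowRank G (insert j Ai))
    (ci : ℝ) (hci : ci = cVal H G b Ai j)
    (vi : Fin n → ℝ) (hvi : vi = vVec H G S Ai j)
    (fi : Fin m → ℝ) (hfi : fi = -fVec H G Ai j) :
    ∀ θ : Fin n → ℝ,
      zOf H G b S Ai θ =
        zOf H G b S (insert j Ai) θ + (ci + vi ⬝ᵥ θ) • fi := by
  intro θ
  rw [zOf_insert hH hj hAi hAj, hci, hvi, hfi,
    cVal_add_vVec_dotProduct (isHermitian_iff_isSymm.mp hH.isHermitian), smul_neg,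
    add_neg_cancel_right]

end MpQP
end
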